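/- arXiv:2306.16364 — 2 statements merged into one kernel-verified Lean document; each statement's English description precedes it below -/
import Mathlib

section
/- A nonempty word w is primitive if and only if for all m, whenever w^m = u · w · v with u and v nonempty, u = w^n and v = w^{n'} for some n, n' < m. -/
/-- `wpow w n` is the `n`-fold concatenation `w^n` of the word `w` (a list), with `w^0 = []`. -/
def wpow {α : Type*} (w : List α) (n : ℕ) : List α := (List.replicate n w).flatten

/-- A nonempty word is primitive if it is not a power of any word other than itself. -/
def Primitive {α : Type*} (w : List α) : Prop :=
  w ≠ [] ∧ ∀ (z : List α) (m : ℕ), z ≠ [] → w = wpow z m → w = z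

/-- `expw w u` is the maximal `m` such that `w^m` is a factor of `u`. -/
noncomputable def expw {α : Type*} (w u : List α) : ℕ := sSup {m : ℕ | wpow w m <:+: u}

/-- Two words are conjugate if `w = x·y` and `v = y·x`. -/
def Conj {α : Type*} (w v : List α) : Prop := ∃ x y : List α, w = x ++ y ∧ v = y ++ x

/-!
If `w` is primitive and `w^m = u w v`, cut `u` as `w^q a` with `|a| < |w|`. Then `w w x = a w y`
for some `x, y`, so `w = a z` and comparing `z a z x = a z y` gives `a z = z a`. Commuting words
are powers of a common word (Lyndon–Schützenberger), so primitivity of `w = a z` forces `a = []`: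
occurrences of `w` in its powers are aligned. Conversely, if `w = z^(k+2)` then
`w^2 = z · w · z^(k+1)`, and the factor condition makes `z` a power of `w`, hence `z = w`.
-/

theorem List.exists_of_append_eq_append_of_length_le {α : Type*} {a b c d : List α}
    (h : a ++ b = c ++ d) (hac : a.length ≤ c.length) : ∃ e, c = a ++ e ∧ b = e ++ d := by
  rcases List.append_eq_append_iff.mp h with h | ⟨e, rfl, rfl⟩
  · exact h
  · obtain rfl : e = [] := by simpa using hac
    exact ⟨[], by simp, by simp⟩

section Words

variable {α : Type*}

@[simp]
theorem wpow_zero (w : List α) : wpow w 0 = [] := rfl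

theorem wpow_succ (w : List α) (n : ℕ) : wpow w (n + 1) = w ++ wpow w n := by
  simp [wpow, List.replicate_succ]

@[simp]
theorem wpow_one (w : List α) : wpow w 1 = w := by simp [wpow]

theorem wpow_add (w : List α) (a b : ℕ) : wpow w (a + b) = wpow w a ++ wpow w b := by
  simp only [wpow, List.replicate_add, List.flatten_append]

theorem wpow_succ' (w : List α) (n : ℕ) : wpow w (n + 1) = wpow w n ++ w := by
  rw [wpow_add, wpow_one]

@[simp]
theorem length_wpow (w : List α) (n : ℕ) : (wpow w n).length = n * w.length := by
  induction n with
  | zero => simp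
  | succ n ih => rw [wpow_succ, List.length_append, ih]; ring

theorem exists_wpow_of_append_comm {a b : List α} (h : a ++ b = b ++ a) :
    ∃ t : List α, ∃ k l : ℕ, a = wpow t k ∧ b = wpow t l := by
  induction hn : a.length + b.length using Nat.strong_induction_on generalizing a b with
  | _ n ih =>
  wlog hab : a.length ≤ b.length generalizing a b
  · obtain ⟨t, k, l, hb, ha⟩ := this h.symm (by omega) (by omega)
    exact ⟨t, l, k, ha, hb⟩
  rcases eq_or_ne a [] with rfl | ha
  · exact ⟨b, 0, 1, rfl, (wpow_one b).symm⟩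
  obtain ⟨c, rfl, hc⟩ := List.exists_of_append_eq_append_of_length_le h hab
  have hlen : a.length + c.length < n := by
    simp only [List.length_append] at hn
    have := List.length_pos_iff.mpr ha
    omega
  obtain ⟨t, k, l, rfl, rfl⟩ := ih _ hlen hc rfl
  exact ⟨t, k, k + l, rfl, (wpow_add t k l).symm⟩

theorem Primitive.eq_nil_or_eq_nil_of_append_comm {a b : List α} (hw : Primitive (a ++ b))
    (h : a ++ b = b ++ a) : a = [] ∨ b = [] := by
  obtain ⟨t, k, l, rfl, rfl⟩ := exists_wpow_of_append_comm h
  have ht : t ≠ [] := by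
    rintro rfl
    exact hw.1 (List.eq_nil_of_length_eq_zero (by simp))
  have hkl : k + l = 1 := by
    have := congrArg List.length (hw.2 t (k + l) ht (wpow_add t k l).symm)
    simp only [List.length_append, length_wpow, ← add_mul] at this
    exact Nat.eq_of_mul_eq_mul_right (List.length_pos_iff.mpr ht) (this.trans (one_mul _).symm)
  obtain rfl | rfl : k = 0 ∨ l = 0 := by omega
  · simp
  · simp

theorem Primitive.eq_nil_of_append_append_eq {w x y a : List α} (hw : Primitive w)
    (h : w ++ w ++ x = a ++ w ++ y) (ha : a.length < w.length) : a = [] := by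
  rw [List.append_assoc, List.append_assoc] at h
  obtain ⟨z, rfl, hz⟩ := List.exists_of_append_eq_append_of_length_le h.symm ha.le
  have hz' : (a ++ z) ++ y = (z ++ a) ++ (z ++ x) := by simpa only [List.append_assoc] using hz
  have hcomm : a ++ z = z ++ a := (List.append_inj hz' (by simp [Nat.add_comm])).1
  refine (hw.eq_nil_or_eq_nil_of_append_comm hcomm).resolve_right ?_
  rintro rfl
  simp at ha

theorem Primitive.exists_wpow_of_wpow_eq_append {w u v : List α} {m : ℕ} (hw : Primitive w)
    (h : wpow w m = u ++ w ++ v) :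
    ∃ n n' : ℕ, u = wpow w n ∧ v = wpow w n' ∧ n + 1 + n' = m := by
  have hw0 : 0 < w.length := List.length_pos_iff.mpr hw.1
  have hlen : m * w.length = u.length + (w.length + v.length) := by
    simpa using congrArg List.length h
  obtain ⟨q, r, hqr, hr⟩ : ∃ q r, u.length = q * w.length + r ∧ r < w.length :=
    ⟨_, _, (Nat.div_add_mod' _ _).symm, Nat.mod_lt _ hw0⟩
  have hqm : q ≤ m := Nat.le_of_mul_le_mul_right (by omega) hw0
  obtain ⟨a, rfl, ha⟩ : ∃ a, u = wpow w q ++ a ∧ wpow w (m - q) = a ++ (w ++ v) := by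
    refine List.exists_of_append_eq_append_of_length_le ?_ (by simp only [length_wpow]; omega)
    rw [← wpow_add, Nat.add_sub_cancel' hqm, h, List.append_assoc]
  have hrem : a.length < w.length := by simp only [List.length_append, length_wpow] at hqr; omega
  obtain ⟨p, hp⟩ : ∃ p, m - q = p + 1 :=
    Nat.exists_eq_succ_of_ne_zero fun h0 => by simp [h0, hw.1] at ha
  rw [hp, wpow_succ] at ha
  obtain rfl : a = [] := by
    refine hw.eq_nil_of_append_append_eq (x := wpow w p) (y := v ++ w) ?_ hrem
    rw [List.append_assoc w, ← wpow_succ w p, wpow_succ', ← List.append_assoc, ha]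
    simp
  exact ⟨q, p, by simp, List.append_cancel_left ha.symm, by omega⟩

end Words

theorem stmt_0 {α : Type*} (w : List α) (hw : w ≠ []) :
    Primitive w ↔
      ∀ (m : ℕ) (u v : List α), u ≠ [] → v ≠ [] → wpow w m = u ++ w ++ v →
        ∃ n n' : ℕ, n < m ∧ n' < m ∧ u = wpow w n ∧ v = wpow w n' := by
  constructor
  · intro hprim m u v _ _ h
    obtain ⟨n, n', rfl, rfl, rfl⟩ := hprim.exists_wpow_of_wpow_eq_append h
    exact ⟨n, n', by omega, by omega, rfl, rfl⟩
  · intro hfac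
    refine ⟨hw, fun z m hz hzm => ?_⟩
    obtain _ | _ | k := m
    · exact absurd hzm hw
    · simpa using hzm
    have hsquare : wpow w 2 = z ++ w ++ wpow z (k + 1) := by
      calc wpow w 2 = wpow z (k + 2 + (k + 2)) := by rw [wpow_add, ← hzm, wpow_succ, wpow_one]
        _ = wpow z (1 + (k + 2) + (k + 1)) := by congr 1; omega
        _ = z ++ w ++ wpow z (k + 1) := by rw [wpow_add, wpow_add, wpow_one, hzm]
    have hne : wpow z (k + 1) ≠ [] := by
      rw [wpow_succ]; exact List.append_ne_nil_of_left_ne_nil hz _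
    obtain ⟨n, -, hn, -, hzn, -⟩ := hfac 2 z (wpow z (k + 1)) hz hne hsquare
    interval_cases n
    · exact absurd hzn hz
    · simpa using hzn.symm
end

section
/- For primitive words w and v that are not conjugate, there exists r ∈ ℕ such that every common factor of w^n and v^m, for any n, m ∈ ℕ, has length at most r. -/
/-!
A common factor `u` of `w^n` and `v^m` has periods `|w|` and `|v|`; once `|u| ≥ |w| + |v|`, the
Fine–Wilf periodicity lemma gives `u` the period `g = gcd |w| |v|`. The length-`|w|` prefix of `u`
is then both a rotation of `w` and a power of the length-`g` prefix `t` of `u`, so `w` is a power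
of a rotation of `t`; primitivity forces `w` itself to be a rotation of `t`. The same holds for `v`,
so `w` and `v` are conjugate.
-/

section Words

variable {α : Type*}

theorem append_wpow_comm (x y : List α) (k : ℕ) :
    x ++ wpow (y ++ x) k = wpow (x ++ y) k ++ x := by
  induction k with
  | zero => simp [wpow]
  | succ k ih => simp only [wpow_succ, ← ih, List.append_assoc]

theorem rotate_wpow (t : List α) (k j : ℕ) : (wpow t k).rotate j = wpow (t.rotate j) k := by
  have rotate_one : ∀ s : List α, (wpow s k).rotate 1 = wpow (s.rotate 1) k := by
    rintro (_ | ⟨a, s⟩)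
    · simp [wpow]
    · cases k with
      | zero => simp [wpow]
      | succ k =>
        have h := append_wpow_comm [a] s k
        rw [List.singleton_append, List.singleton_append] at h
        rw [wpow_succ, List.cons_append, List.rotate_cons_succ, List.rotate_cons_succ,
          List.rotate_zero, List.rotate_zero, List.append_assoc, ← h, wpow_succ,
          List.append_cons s a]
  induction j with
  | zero => simp
  | succ j ih => rw [← List.rotate_rotate, ih, rotate_one, List.rotate_rotate]

theorem hasPeriod_wpow (w : List α) (n : ℕ) : (wpow w n).HasPeriod w.length := by
  cases n with
  | zero => exact List.hasPeriod_empty _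
  | succ n =>
    rw [List.HasPeriod, wpow_succ, List.take_left' rfl, List.prefix_append_right_inj,
      ← wpow_succ, wpow_succ']
    exact List.prefix_append _ _

theorem List.HasPeriod.take_mul_eq_wpow {u : List α} {g : ℕ} (hu : u.HasPeriod g) (k : ℕ)
    (hk : g * k ≤ u.length) : u.take (g * k) = wpow (u.take g) k := by
  induction k with
  | zero => simp [wpow]
  | succ k ih =>
    have hdrop : (u.drop g).take (g * k) = u.take (g * k) := by
      conv_lhs => rw [List.prefix_iff_eq_take.mp (hu.drop_prefix g), List.take_take]
      rw [List.length_drop, min_eq_left (by rw [Nat.mul_succ] at hk; omega)]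
    rw [Nat.mul_succ, add_comm, List.take_add, hdrop, ih (by rw [Nat.mul_succ] at hk; omega),
      wpow_succ]

theorem isRotated_take_of_infix_wpow {u w : List α} {n : ℕ} (hu : u <:+: wpow w n)
    (hw : w.length ≤ u.length) : u.take w.length ~r w := by
  obtain ⟨s, t, h⟩ := hu
  have hlen := congrArg List.length h
  simp only [List.length_append] at hlen
  cases n with
  | zero => simp_all [wpow]
  | succ n =>
    have hprefix : u.take w.length = ((wpow w (n + 1)).rotate s.length).take w.length := by
      rw [List.rotate_eq_drop_append_take (by omega), List.take_append_of_le_length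
        (by simp only [List.length_drop]; omega), ← h, List.append_assoc, List.drop_left,
        List.take_append_of_le_length hw]
    rw [hprefix, rotate_wpow, wpow_succ, List.take_left' (List.length_rotate _ _)]
    exact List.IsRotated.forall w _

theorem Primitive.isRotated_of_wpow_isRotated {z t : List α} {k : ℕ} (hz : Primitive z)
    (ht : t ≠ []) (h : wpow t k ~r z) : t ~r z := by
  obtain ⟨j, hj⟩ := h
  rw [rotate_wpow] at hj
  exact ⟨j, (hz.2 _ k (List.rotate_eq_nil_iff.not.mpr ht) hj.symm).symm⟩

theorem Primitive.take_isRotated_of_hasPeriod {z u : List α} {n g : ℕ} (hz : Primitive z)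
    (hu : u <:+: wpow z n) (hg : u.HasPeriod g) (hgz : g ∣ z.length)
    (hzu : z.length ≤ u.length) : u.take g ~r z := by
  have hz0 : 0 < z.length := List.length_pos_iff.mpr hz.1
  have hg0 : 0 < g := Nat.pos_of_dvd_of_pos hgz hz0
  have hgu : g ≤ u.length := (Nat.le_of_dvd hz0 hgz).trans hzu
  have htake : u.take g ≠ [] := by
    rw [← List.length_pos_iff, List.length_take]
    omega
  obtain ⟨k, hk⟩ := hgz
  have hrot := isRotated_take_of_infix_wpow hu hzu
  rw [hk, hg.take_mul_eq_wpow k (hk ▸ hzu)] at hrot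
  exact hz.isRotated_of_wpow_isRotated htake hrot

theorem Conj.of_isRotated {w v : List α} (h : w ~r v) : Conj w v := by
  obtain ⟨n, hn, rfl⟩ := List.isRotated_iff_mod.mp h
  exact ⟨w.take n, w.drop n, (List.take_append_drop n w).symm, List.rotate_eq_drop_append_take hn⟩

end Words

theorem stmt_6 {α : Type*} (w v : List α) (hw : Primitive w) (hv : Primitive v)
    (hnc : ¬ Conj w v) :
    ∃ r : ℕ, ∀ (n m : ℕ) (u : List α),
      u <:+: wpow w n → u <:+: wpow v m → u.length ≤ r := by
  refine ⟨w.length + v.length, fun n m u huw huv => ?_⟩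
  by_contra! hlong
  have hgcd : u.HasPeriod (w.length.gcd v.length) :=
    ((hasPeriod_wpow w n).infix huw).gcd ((hasPeriod_wpow v m).infix huv) (by omega)
  have hw_rot := hw.take_isRotated_of_hasPeriod huw hgcd (Nat.gcd_dvd_left _ _) (by omega)
  have hv_rot := hv.take_isRotated_of_hasPeriod huv hgcd (Nat.gcd_dvd_right _ _) (by omega)
  exact hnc (Conj.of_isRotated (hw_rot.symm.trans hv_rot))
end
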